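/- Let μ be a compactly supported Borel probability measure on ℝⁿ, λ : ℝⁿ → ℝ continuous, g : ℝ → ℝⁿ continuously differentiable, and τ : ℝⁿ → ℝ continuous and bounded. Then the function F(ε) = ½ ∫ ‖g(λ(x) + ε·τ(x)) − x‖² dμ(x) is differentiable at ε = 0 with derivative F'(0) = ∫ ⟨g(λ(x)) − x, g'(λ(x))⟩ · τ(x) dμ(x). -/

import Mathlib

/-!
The ε-derivative of `‖g (lam x + ε * τ x) - x‖ ^ 2` is
`2 ⟪g (lam x + ε * τ x) - x, τ x • g' (lam x + ε * τ x)⟫`, which is jointly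
continuous in `(ε, x)`. Since `μ` is carried by a compact set `K`, this derivative is
bounded on `closedBall 0 1 ×ˢ K`, and dominated convergence allows
differentiating under the integral sign.
-/

open MeasureTheory Filter Metric

section CompactlyConcentrated

variable {α E : Type*} [TopologicalSpace α] [T2Space α] [MeasurableSpace α]
  [OpensMeasurableSpace α] [NormedAddCommGroup E] {μ : Measure α}
  [IsFiniteMeasureOnCompacts μ] {K : Set α}

theorem Continuous.integrable_of_ae_mem_isCompact (hK : IsCompact K)
    (hμK : ∀ᵐ x ∂μ, x ∈ K) {f : α → E} (hf : Continuous f) : Integrable f μ := by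
  simpa only [IntegrableOn, Measure.restrict_eq_self_of_ae_mem hμK] using
    hf.continuousOn.integrableOn_compact (μ := μ) hK

theorem hasDerivAt_integral_of_continuous_deriv_of_ae_mem_isCompact [NormedSpace ℝ E]
    (hK : IsCompact K) (hμK : ∀ᵐ x ∂μ, x ∈ K) {F F' : ℝ → α → E}
    (hF : ∀ ε, Continuous (F ε)) (hF' : Continuous (Function.uncurry F'))
    (hderiv : ∀ ε x, HasDerivAt (F · x) (F' ε x) ε) (ε₀ : ℝ) :
    HasDerivAt (fun ε ↦ ∫ x, F ε x ∂μ) (∫ x, F' ε₀ x ∂μ) ε₀ := by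
  obtain ⟨B, hB⟩ :=
    ((isCompact_closedBall ε₀ 1).prod hK).exists_bound_of_continuousOn hF'.continuousOn
  have hint {f : α → E} (hf : Continuous f) : Integrable f μ :=
    hf.integrable_of_ae_mem_isCompact hK hμK
  refine (hasDerivAt_integral_of_dominated_loc_of_deriv_le (bound := fun _ ↦ B)
    (closedBall_mem_nhds ε₀ one_pos) (.of_forall fun ε ↦ (hint (hF ε)).aestronglyMeasurable)
    (hint (hF ε₀)) (hint (hF'.uncurry_left ε₀)).aestronglyMeasurable ?_
    (continuous_const.integrable_of_ae_mem_isCompact hK hμK)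
    (.of_forall fun x ε _ ↦ hderiv ε x)).2
  filter_upwards [hμK] with x hx ε hε using hB (ε, x) ⟨hε, hx⟩

end CompactlyConcentrated

theorem gateaux_derivative_uls_risk_encoder_general {n : ℕ}
    (μ : Measure (EuclideanSpace ℝ (Fin n))) [IsProbabilityMeasure μ]
    (hsupp : ∃ K : Set (EuclideanSpace ℝ (Fin n)), IsCompact K ∧ μ Kᶜ = 0)
    (lam : EuclideanSpace ℝ (Fin n) → ℝ) (hlam : Continuous lam)
    (g : ℝ → EuclideanSpace ℝ (Fin n)) (hg : ContDiff ℝ 1 g)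
    (τ : EuclideanSpace ℝ (Fin n) → ℝ) (hτ : Continuous τ) :
    HasDerivAt (fun ε : ℝ => (1 / 2 : ℝ) * ∫ x, ‖g (lam x + ε * τ x) - x‖ ^ 2 ∂μ)
      (∫ x, (inner ℝ (g (lam x) - x) (deriv g (lam x)) : ℝ) * τ x ∂μ) 0 := by
  obtain ⟨K, hK, hKc⟩ := hsupp
  have hgd : Differentiable ℝ g := hg.differentiable one_ne_zero
  have hg'c : Continuous (deriv g) := hg.continuous_deriv le_rfl
  have hderiv (ε : ℝ) (x : EuclideanSpace ℝ (Fin n)) :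
      HasDerivAt (fun ε ↦ ‖g (lam x + ε * τ x) - x‖ ^ 2)
        (2 * inner ℝ (g (lam x + ε * τ x) - x) (τ x • deriv g (lam x + ε * τ x))) ε :=
    (((hgd _).hasDerivAt.scomp ε ((hasDerivAt_mul_const (τ x)).const_add (lam x))).sub_const
      x).norm_sq
  refine ((hasDerivAt_integral_of_continuous_deriv_of_ae_mem_isCompact hK (mem_ae_iff.2 hKc)
    (fun ε ↦ by fun_prop) (by fun_prop) hderiv 0).const_mul (1 / 2 : ℝ)).congr_deriv ?_
  rw [← integral_const_mul]
  congr 1 with x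
  simp only [zero_mul, add_zero, inner_smul_right]
  ring

/-- The Gâteaux derivative (first variation) of the unsupervised least squares risk
with respect to the encoder `lam` in the direction `τ`. -/
theorem gateaux_derivative_uls_risk_encoder {n : ℕ}
    (μ : Measure (EuclideanSpace ℝ (Fin n))) [IsProbabilityMeasure μ]
    (hsupp : ∃ K : Set (EuclideanSpace ℝ (Fin n)), IsCompact K ∧ μ Kᶜ = 0)
    (lam : EuclideanSpace ℝ (Fin n) → ℝ) (hlam : Continuous lam)
    (g : ℝ → EuclideanSpace ℝ (Fin n)) (hg : ContDiff ℝ 1 g)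
    (τ : EuclideanSpace ℝ (Fin n) → ℝ) (hτ : Continuous τ) (hτb : ∃ C, ∀ x, |τ x| ≤ C) :
    HasDerivAt (fun ε : ℝ => (1 / 2 : ℝ) * ∫ x, ‖g (lam x + ε * τ x) - x‖ ^ 2 ∂μ)
      (∫ x, (inner ℝ (g (lam x) - x) (deriv g (lam x)) : ℝ) * τ x ∂μ) 0 :=
  gateaux_derivative_uls_risk_encoder_general μ hsupp lam hlam g hg τ hτ
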